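/- arXiv:2208.01304 — 2 statements merged into one kernel-verified Lean document; each statement's English description precedes it below -/
import Mathlib

section
/- Let a locally compact abelian group G act via α on a Hausdorff uniform space (X, 𝒰), with 𝒰 G-invariant. Then for x ∈ X: (a) if x is Bochner-type almost periodic (the orbit closure H_x is compact), then x is pseudo Bochner-type almost periodic (for every U ∈ 𝒰 the set P_U(x) is finitely relatively dense); (b) if (X, 𝒰) is complete and x is pseudo Bochner-type almost periodic, then x is Bochner-type almost periodic. -/
/-!
For an action whose translations form a uniformly equicontinuous family, closeness of two orbit
points `t +ᵥ x` and `g +ᵥ x` can be moved back and forth by translating by `±g`, so it is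
equivalent to `t - g` being an almost period. Hence a finite set `F` with `P_U(x) + F = G` is the
same thing as a finite net `{g +ᵥ x | g ∈ F}` of the orbit: finitely relatively dense almost
periods amount to a totally bounded orbit. A compact hull is totally bounded, and in a complete
space the closure of a totally bounded set is compact.
-/

open Uniformity Pointwise

theorem totallyBounded_range_iff {ι α : Type*} [UniformSpace α] {f : ι → α} :
    TotallyBounded (Set.range f) ↔
      ∀ V ∈ 𝓤 α, ∃ F : Set ι, F.Finite ∧ ∀ i, ∃ j ∈ F, (f i, f j) ∈ V := by
  refine ⟨fun hf V hV => ?_, fun hf V hV => ?_⟩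
  · obtain ⟨t, hts, htfin, hcov⟩ := hf.exists_subset hV
    choose g hg using fun y : t => hts y.2
    have := htfin.to_subtype
    refine ⟨Set.range g, Set.finite_range g, fun i => ?_⟩
    obtain ⟨y, hy, hiy⟩ := Set.mem_iUnion₂.mp (hcov (Set.mem_range_self i))
    exact ⟨g ⟨y, hy⟩, Set.mem_range_self _, (hg ⟨y, hy⟩).symm ▸ hiy⟩
  · obtain ⟨F, hFfin, hF⟩ := hf V hV
    refine ⟨f '' F, hFfin.image f, Set.range_subset_iff.2 fun i => ?_⟩
    obtain ⟨j, hj, hij⟩ := hF i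
    exact Set.mem_biUnion (Set.mem_image_of_mem f hj) hij

def IsFinitelyRelativelyDense {G : Type*} [Add G] (A : Set G) : Prop :=
  ∃ F : Set G, F.Finite ∧ A + F = Set.univ

theorem isFinitelyRelativelyDense_iff {G : Type*} [AddGroup G] {A : Set G} :
    IsFinitelyRelativelyDense A ↔
      ∃ F : Set G, F.Finite ∧ ∀ t, ∃ g ∈ F, t - g ∈ A := by
  refine exists_congr fun F => and_congr_right fun _ => ?_
  simp only [Set.eq_univ_iff_forall, Set.mem_add]
  refine forall_congr' fun t => ⟨?_, ?_⟩
  · rintro ⟨a, ha, g, hg, rfl⟩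
    exact ⟨g, hg, by rwa [add_sub_cancel_right]⟩
  · rintro ⟨g, hg, hA⟩
    exact ⟨t - g, hA, g, hg, sub_add_cancel t g⟩

section UniformlyEquicontinuousAction

variable {G X : Type*} [AddCommGroup G] [AddAction G X] [UniformSpace X]

variable (G) in
def almostPeriods (x : X) (U : Set (X × X)) : Set G :=
  {t | (t +ᵥ x, x) ∈ U}

theorem totallyBounded_orbit_iff
    (hequi : UniformEquicontinuous fun g : G => ((g +ᵥ ·) : X → X)) (x : X) :
    TotallyBounded (AddAction.orbit G x) ↔
      ∀ U ∈ 𝓤 X, IsFinitelyRelativelyDense (almostPeriods G x U) := by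
  simp only [AddAction.orbit, totallyBounded_range_iff, isFinitelyRelativelyDense_iff]
  refine ⟨fun h U hU => ?_, fun h U hU => ?_⟩
  · obtain ⟨F, hFfin, hF⟩ := h _ (hequi U hU)
    refine ⟨F, hFfin, fun t => ?_⟩
    obtain ⟨g, hg, htg⟩ := hF t
    have hshift := htg (-g)
    simp only [vadd_vadd, neg_add_cancel, zero_vadd, neg_add_eq_sub] at hshift
    exact ⟨g, hg, hshift⟩
  · obtain ⟨F, hFfin, hF⟩ := h _ (hequi U hU)
    refine ⟨F, hFfin, fun t => ?_⟩
    obtain ⟨g, hg, htg⟩ := hF t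
    have hshift := htg g
    simp only [vadd_vadd, add_sub_cancel] at hshift
    exact ⟨g, hg, hshift⟩

end UniformlyEquicontinuousAction

theorem stmt4_general {G X : Type*}
    [AddCommGroup G]
    [UniformSpace X]
    (α : G → X → X)
    (hzero : ∀ x, α 0 x = x)
    (hadd : ∀ s t x, α s (α t x) = α (s + t) x)
    (hinv : ∀ U ∈ 𝓤 X, ∃ U' ∈ 𝓤 X, ∀ (t : G), ∀ p : X × X, p ∈ U' →
      (α t p.1, α t p.2) ∈ U)
    (x : X) :
    (IsCompact (closure (Set.range fun t : G => α t x)) →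
      ∀ U ∈ 𝓤 X, ∃ F : Set G, F.Finite ∧ {t : G | (α t x, x) ∈ U} + F = Set.univ)
    ∧
    (CompleteSpace X →
      (∀ U ∈ 𝓤 X, ∃ F : Set G, F.Finite ∧ {t : G | (α t x, x) ∈ U} + F = Set.univ) →
      IsCompact (closure (Set.range fun t : G => α t x))) := by
  let _ : AddAction G X :=
    { vadd := α, zero_vadd := hzero, add_vadd := fun s t x => (hadd s t x).symm }
  have hequi : UniformEquicontinuous fun g : G => ((g +ᵥ ·) : X → X) := fun U hU =>
    let ⟨U', hU', hU'U⟩ := hinv U hU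
    Filter.mem_of_superset hU' fun p hp t => hU'U t p hp
  have key := totallyBounded_orbit_iff hequi x
  exact ⟨fun hcompact => key.1 (hcompact.totallyBounded.subset subset_closure),
    fun _ hdense => (key.2 hdense).closure.isCompact_of_isClosed isClosed_closure⟩

/-- Let a locally compact abelian group `G` act via `α` on a Hausdorff uniform
space `(X, 𝒰)` with `𝒰` `G`-invariant. Then:
(a) Bochner-type almost periodicity (compact orbit closure) implies pseudo Bochner-type almost
    periodicity (the sets of almost periods are finitely relatively dense);
(b) if `(X, 𝒰)` is complete, pseudo Bochner-type almost periodicity implies Bochner-type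
    almost periodicity. -/
theorem stmt4 {G X : Type*}
    [AddCommGroup G] [TopologicalSpace G] [IsTopologicalAddGroup G]
    [LocallyCompactSpace G] [T2Space G]
    [UniformSpace X] [T2Space X]
    (α : G → X → X)
    (hzero : ∀ x, α 0 x = x)
    (hadd : ∀ s t x, α s (α t x) = α (s + t) x)
    (hinv : ∀ U ∈ 𝓤 X, ∃ U' ∈ 𝓤 X, ∀ (t : G), ∀ p : X × X, p ∈ U' →
      (α t p.1, α t p.2) ∈ U)
    (x : X) :
    (IsCompact (closure (Set.range fun t : G => α t x)) →
      ∀ U ∈ 𝓤 X, ∃ F : Set G, F.Finite ∧ {t : G | (α t x, x) ∈ U} + F = Set.univ)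
    ∧
    (CompleteSpace X →
      (∀ U ∈ 𝓤 X, ∃ F : Set G, F.Finite ∧ {t : G | (α t x, x) ∈ U} + F = Set.univ) →
      IsCompact (closure (Set.range fun t : G => α t x))) :=
  stmt4_general α hzero hadd hinv x
end

section
/- Let a locally compact abelian group G act via α on a set X carrying a G-invariant uniformity 𝒰, and let 𝒰_mix be the mixed uniformity. If the uniformity 𝒰 is metrizable (equivalently, has a countable basis of entourages) and the topology of G is metrizable, then 𝒰_mix is metrizable. -/
open Uniformity

/-- The basic mixed entourage `V[O,U] = {(α t x, y) : t ∈ O, (x,y) ∈ U}`. -/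
def mixEnt {G X : Type*} (α : G → X → X) (O : Set G) (U : Set (X × X)) : Set (X × X) :=
  {p : X × X | ∃ t ∈ O, ∃ q ∈ U, p.1 = α t q.1 ∧ p.2 = q.2}

/-- The mixed uniformity `𝒰_mix`: all supersets of some `V[O,U]` with `U ∈ 𝒰` and `O` an open
set containing `0`. -/
def mixUniformity {G X : Type*} [AddCommGroup G] [TopologicalSpace G] [UniformSpace X]
    (α : G → X → X) : Set (Set (X × X)) :=
  {V : Set (X × X) | ∃ U ∈ 𝓤 X, ∃ O : Set G, IsOpen O ∧ (0 : G) ∈ O ∧ mixEnt α O U ⊆ V}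

open Topology

section MixedUniformity

variable {G X : Type*} (α : G → X → X)

theorem mixEnt_mono {O O' : Set G} {U U' : Set (X × X)} (hO : O ⊆ O') (hU : U ⊆ U') :
    mixEnt α O U ⊆ mixEnt α O' U' := by
  rintro p ⟨t, ht, q, hq, h1, h2⟩
  exact ⟨t, hO ht, q, hU hq, h1, h2⟩

variable [AddCommGroup G] [TopologicalSpace G] [UniformSpace X]

theorem mixEnt_mem_mixUniformity {O : Set G} {U : Set (X × X)} (hU : U ∈ 𝓤 X) (hO : IsOpen O)
    (hO0 : (0 : G) ∈ O) : mixEnt α O U ∈ mixUniformity α :=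
  ⟨U, hU, O, hO, hO0, subset_rfl⟩

theorem exists_mixEnt_subset_of_mem_mixUniformity {ι : Type*} {p : ι → Prop} {s : ι → Set G}
    (hs : (𝓝 (0 : G)).HasBasis p s) {B : Set (Set (X × X))}
    (hB : ∀ U ∈ 𝓤 X, ∃ W ∈ B, W ⊆ U) {V : Set (X × X)} (hV : V ∈ mixUniformity α) :
    ∃ i, p i ∧ ∃ W ∈ B, mixEnt α (s i) W ⊆ V := by
  obtain ⟨U, hU, O, hO, hO0, hOU⟩ := hV
  obtain ⟨i, hi, hsO⟩ := hs.mem_iff.1 (hO.mem_nhds hO0)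
  obtain ⟨W, hW, hWU⟩ := hB U hU
  exact ⟨i, hi, W, hW, (mixEnt_mono α hsO hWU).trans hOU⟩

end MixedUniformity

theorem stmt12_general {G X : Type*}
    [AddCommGroup G] [TopologicalSpace G] [TopologicalSpace.MetrizableSpace G]
    [UniformSpace X]
    (α : G → X → X)
    -- `𝒰` has a countable basis of entourages
    (hbasis : ∃ B : Set (Set (X × X)), B.Countable ∧ (∀ W ∈ B, W ∈ 𝓤 X) ∧
      ∀ U ∈ 𝓤 X, ∃ W ∈ B, W ⊆ U) :
    -- `𝒰_mix` has a countable basis of entourages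
    ∃ B : Set (Set (X × X)), B.Countable ∧ B ⊆ mixUniformity α ∧
      ∀ V ∈ mixUniformity α, ∃ W ∈ B, W ⊆ V := by
  obtain ⟨B, hBc, hB𝓤, hB⟩ := hbasis
  obtain ⟨s, hs_open, hs⟩ := (nhds_basis_opens (0 : G)).exists_antitone_subbasis
  refine ⟨Set.image2 (fun n W => mixEnt α (s n) W) Set.univ B,
    Set.countable_univ.image2 hBc _, ?_, ?_⟩
  · rintro _ ⟨n, -, W, hW, rfl⟩
    exact mixEnt_mem_mixUniformity α (hB𝓤 W hW) (hs_open n).2 (hs_open n).1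
  · intro V hV
    obtain ⟨n, -, W, hW, hWV⟩ :=
      exists_mixEnt_subset_of_mem_mixUniformity α hs.toHasBasis hB hV
    exact ⟨_, Set.mem_image2_of_mem trivial hW, hWV⟩

/-- If the uniformity `𝒰` is metrizable (equivalently, has a countable basis
of entourages) and the topology of `G` is metrizable, then the mixed uniformity `𝒰_mix` is
metrizable (equivalently, has a countable basis of entourages). -/
theorem stmt12 {G X : Type*}
    [AddCommGroup G] [TopologicalSpace G] [IsTopologicalAddGroup G]
    [LocallyCompactSpace G] [T2Space G] [TopologicalSpace.MetrizableSpace G]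
    [UniformSpace X]
    (α : G → X → X)
    (hzero : ∀ x, α 0 x = x)
    (hadd : ∀ s t x, α s (α t x) = α (s + t) x)
    (hinv : ∀ U ∈ 𝓤 X, ∃ U' ∈ 𝓤 X, ∀ (t : G), ∀ p : X × X, p ∈ U' →
      (α t p.1, α t p.2) ∈ U)
    -- `𝒰` has a countable basis of entourages
    (hbasis : ∃ B : Set (Set (X × X)), B.Countable ∧ (∀ W ∈ B, W ∈ 𝓤 X) ∧
      ∀ U ∈ 𝓤 X, ∃ W ∈ B, W ⊆ U) :
    -- `𝒰_mix` has a countable basis of entourages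
    ∃ B : Set (Set (X × X)), B.Countable ∧ B ⊆ mixUniformity α ∧
      ∀ V ∈ mixUniformity α, ∃ W ∈ B, W ⊆ V :=
  stmt12_general α hbasis
end
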